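/- arXiv:2311.02464 — 2 statements merged into one kernel-verified Lean document; each statement's English description precedes it below -/
import Mathlib

section
/- Let X be a real random variable with density bounded by K, let D ≥ 0 be independent of X with E[D²] ≤ B, and let α, ε > 0. Then for every x ∈ ℝ, P(x < X ≤ x + min(αD, ε)) ≤ 2 α K √B. -/
open MeasureTheory ProbabilityTheory

open scoped ENNReal

/-!
Write `Z = min (α D) ε`, a function of `D` and hence independent of `X`. The joint law of `(Z, X)`
is a product, and a density bounded by `K` gives every interval at most `K` times its length, so
integrating over `Z` gives `P(x < X ≤ x + Z) ≤ K E[Z]`. Finally `E[Z] ≤ α E[D] ≤ α √E[D²] ≤ α √B`,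
the middle step being `Var D ≥ 0`.
-/

lemma integral_le_sqrt_integral_sq {Ω : Type*} [MeasurableSpace Ω] {μ : Measure Ω}
    [IsProbabilityMeasure μ] {D : Ω → ℝ} (hD : MemLp D 2 μ) :
    ∫ ω, D ω ∂μ ≤ √(∫ ω, D ω ^ 2 ∂μ) := by
  refine Real.le_sqrt_of_sq_le ?_
  have hvar := variance_eq_sub hD ▸ variance_nonneg D μ
  simpa [sub_nonneg] using hvar

lemma withDensity_ofReal_le_smul {α : Type*} [MeasurableSpace α] (μ : Measure α) {f : α → ℝ}
    {K : ℝ} (hK : ∀ y, f y ≤ K) :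
    μ.withDensity (fun y => ENNReal.ofReal (f y)) ≤ ENNReal.ofReal K • μ :=
  withDensity_const (μ := μ) _ ▸
    withDensity_mono (Filter.Eventually.of_forall fun y => ENNReal.ofReal_le_ofReal (hK y))

lemma measure_lt_le_add_le_of_indepFun {Ω : Type*} [MeasurableSpace Ω] {μ : Measure Ω}
    [IsFiniteMeasure μ] {X Z : Ω → ℝ} (hX : Measurable X) (hZ : Measurable Z)
    (hindep : IndepFun X Z μ) {c : ℝ≥0∞} (hlaw : μ.map X ≤ c • volume) (x : ℝ) :
    μ {ω | x < X ω ∧ X ω ≤ x + Z ω} ≤ c * ∫⁻ ω, ENNReal.ofReal (Z ω) ∂μ := by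
  set S : Set (ℝ × ℝ) := {p | x < p.2 ∧ p.2 ≤ x + p.1}
  have hS : MeasurableSet S :=
    (measurableSet_lt measurable_const measurable_snd).inter
      (measurableSet_le measurable_snd (measurable_const.add measurable_fst))
  have hslice (z : ℝ) : μ.map X (Prod.mk z ⁻¹' S) ≤ c * ENNReal.ofReal z := by
    have hIoc : Prod.mk z ⁻¹' S = Set.Ioc x (x + z) := rfl
    simpa [hIoc, Real.volume_Ioc] using hlaw (Set.Ioc x (x + z))
  calc μ {ω | x < X ω ∧ X ω ≤ x + Z ω}
      = (μ.map Z).prod (μ.map X) S := by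
        rw [← (indepFun_iff_map_prod_eq_prod_map_map hZ.aemeasurable hX.aemeasurable).1
          hindep.symm, Measure.map_apply (hZ.prodMk hX) hS]
        rfl
    _ = ∫⁻ z, μ.map X (Prod.mk z ⁻¹' S) ∂(μ.map Z) := Measure.prod_apply hS
    _ ≤ ∫⁻ z, c * ENNReal.ofReal z ∂(μ.map Z) := lintegral_mono hslice
    _ = ∫⁻ ω, c * ENNReal.ofReal (Z ω) ∂μ := lintegral_map (by fun_prop) hZ
    _ = c * ∫⁻ ω, ENNReal.ofReal (Z ω) ∂μ := lintegral_const_mul _ (by fun_prop)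

theorem lemma_one_abstract_general
    {Ω : Type*} [MeasurableSpace Ω] (μ : Measure Ω) [IsProbabilityMeasure μ]
    (X D : Ω → ℝ) (hX : Measurable X) (hD : Measurable D)
    (f : ℝ → ℝ) (hf0 : ∀ y, 0 ≤ f y) (K : ℝ)
    (hdens : μ.map X = (volume : Measure ℝ).withDensity fun y => ENNReal.ofReal (f y))
    (hK : ∀ y, f y ≤ K)
    (hD0 : ∀ ω, 0 ≤ D ω)
    (hD2int : Integrable (fun ω => (D ω) ^ 2) μ)
    (B : ℝ) (hB2 : ∫ ω, (D ω) ^ 2 ∂μ ≤ B)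
    (hindep : IndepFun X D μ)
    (α ε : ℝ) (hα : 0 < α) (x : ℝ) :
    (μ {ω | x < X ω ∧ X ω ≤ x + min (α * D ω) ε}).toReal ≤ 2 * α * K * Real.sqrt B := by
  have hK0 : 0 ≤ K := (hf0 0).trans (hK 0)
  have hD2 : MemLp D 2 μ := (memLp_two_iff_integrable_sq hD.aestronglyMeasurable).2 hD2int
  have hED : ∫ ω, D ω ∂μ ≤ √B :=
    (integral_le_sqrt_integral_sq hD2).trans (Real.sqrt_le_sqrt hB2)
  have hmin : ∫⁻ ω, ENNReal.ofReal (min (α * D ω) ε) ∂μ ≤ ENNReal.ofReal (α * √B) :=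
    calc ∫⁻ ω, ENNReal.ofReal (min (α * D ω) ε) ∂μ
        ≤ ∫⁻ ω, ENNReal.ofReal (α * D ω) ∂μ :=
          lintegral_mono fun ω => ENNReal.ofReal_le_ofReal (min_le_left _ _)
      _ = ENNReal.ofReal (α * ∫ ω, D ω ∂μ) := by
          rw [← integral_const_mul, ofReal_integral_eq_lintegral_ofReal
            ((hD2.integrable one_le_two).const_mul α)
            (Filter.Eventually.of_forall fun ω => mul_nonneg hα.le (hD0 ω))]
      _ ≤ ENNReal.ofReal (α * √B) :=
          ENNReal.ofReal_le_ofReal (mul_le_mul_of_nonneg_left hED hα.le)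
  have hbound : μ {ω | x < X ω ∧ X ω ≤ x + min (α * D ω) ε} ≤ ENNReal.ofReal (K * (α * √B)) :=
    calc μ {ω | x < X ω ∧ X ω ≤ x + min (α * D ω) ε}
        ≤ ENNReal.ofReal K * ∫⁻ ω, ENNReal.ofReal (min (α * D ω) ε) ∂μ :=
          measure_lt_le_add_le_of_indepFun hX (by fun_prop)
            (hindep.comp (ψ := fun d => min (α * d) ε) measurable_id (by fun_prop))
            (hdens ▸ withDensity_ofReal_le_smul volume hK) x
      _ ≤ ENNReal.ofReal (K * (α * √B)) := by
          rw [ENNReal.ofReal_mul hK0]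
          gcongr
  calc (μ {ω | x < X ω ∧ X ω ≤ x + min (α * D ω) ε}).toReal
      ≤ K * (α * √B) := ENNReal.toReal_le_of_le_ofReal (by positivity) hbound
    _ ≤ 2 * α * K * √B := by nlinarith [show 0 ≤ α * K * √B by positivity]

/-- Lemma 1 in abstract form: if `X` has density bounded by `K`, and `D ≥ 0` is independent of
    `X` with `E[D²] ≤ B`, then `P(x < X ≤ x + min(αD, ε)) ≤ 2αK√B`. -/
theorem lemma_one_abstract
    {Ω : Type*} [MeasurableSpace Ω] (μ : Measure Ω) [IsProbabilityMeasure μ]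
    (X D : Ω → ℝ) (hX : Measurable X) (hD : Measurable D)
    (f : ℝ → ℝ) (hf0 : ∀ y, 0 ≤ f y) (K : ℝ)
    (hdens : μ.map X = (volume : Measure ℝ).withDensity fun y => ENNReal.ofReal (f y))
    (hK : ∀ y, f y ≤ K)
    (hD0 : ∀ ω, 0 ≤ D ω)
    (hDint : Integrable D μ) (hD2int : Integrable (fun ω => (D ω) ^ 2) μ)
    (B : ℝ) (hB : 0 ≤ B) (hB2 : ∫ ω, (D ω) ^ 2 ∂μ ≤ B)
    (hindep : IndepFun X D μ)
    (α ε : ℝ) (hα : 0 < α) (hε : 0 < ε) (x : ℝ) :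
    (μ {ω | x < X ω ∧ X ω ≤ x + min (α * D ω) ε}).toReal ≤ 2 * α * K * Real.sqrt B :=
  lemma_one_abstract_general μ X D hX hD f hf0 K hdens hK hD0 hD2int B hB2 hindep α ε hα x
end

section
/- Let f : [0,1] → ℝ be α-Lipschitz, let S be a [0,1]-valued random variable with E[(S - s)²] ≤ B, let ε > 0, and suppose the random variable X = f(s, ω) (the field value at s) has density bounded by K and the event structure as in the paper. Then |P(f(S) ≤ x) - P(X ≤ x)| ≤ α²B/ε² + 2αK√B for every x ∈ ℝ. -/
open MeasureTheory ProbabilityTheory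

lemma slice_crossing_bound
    {Ω : Type*} [MeasurableSpace Ω] (μ : Measure Ω) [IsProbabilityMeasure μ]
    (X D : Ω → ℝ) (hX : Measurable X) (hD : Measurable D)
    (hD0 : ∀ ω, 0 ≤ D ω) (hint : Integrable D μ)
    (α K : ℝ) (hα : 0 ≤ α) (hK0 : 0 ≤ K)
    (f : ℝ → ℝ)
    (hdens : μ.map X = (volume : Measure ℝ).withDensity fun y => ENNReal.ofReal (f y))
    (hK : ∀ y, f y ≤ K)
    (hindep : IndepFun X D μ)
    (lo hi : ℝ → ℝ) (hlo : Measurable lo) (hhi : Measurable hi)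
    (hlen : ∀ v, 0 ≤ v → hi v - lo v ≤ α * v) :
    μ {ω | lo (D ω) < X ω ∧ X ω ≤ hi (D ω)} ≤
      ENNReal.ofReal (α * K * ∫ ω, D ω ∂μ) := by
  have hmap : μ.map (fun ω => (X ω, D ω)) = (μ.map X).prod (μ.map D) :=
    (indepFun_iff_map_prod_eq_prod_map_map hX.aemeasurable hD.aemeasurable).mp hindep
  set T : Set (ℝ × ℝ) := {p | lo p.2 < p.1 ∧ p.1 ≤ hi p.2} with hT_def
  have hT : MeasurableSet T := by
    apply MeasurableSet.inter
    · exact measurableSet_lt (hlo.comp measurable_snd) measurable_fst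
    · exact measurableSet_le measurable_fst (hhi.comp measurable_snd)
  have h1 : μ {ω | lo (D ω) < X ω ∧ X ω ≤ hi (D ω)} =
      ((μ.map X).prod (μ.map D)) T := by
    rw [← hmap, Measure.map_apply (hX.prodMk hD) hT]
    rfl
  rw [h1, Measure.prod_apply_symm hT]
  have hslice : ∀ v : ℝ, (fun u => (u, v)) ⁻¹' T = Set.Ioc (lo v) (hi v) := by
    intro v; ext u; simp [hT_def, Set.Ioc]
  have hae : ∀ᵐ v ∂(μ.map D), 0 ≤ v := by
    rw [ae_map_iff hD.aemeasurable measurableSet_Ici]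
    exact ae_of_all μ hD0
  have hbound : ∀ᵐ v ∂(μ.map D),
      (μ.map X) ((fun u => (u, v)) ⁻¹' T) ≤ ENNReal.ofReal (α * K * v) := by
    filter_upwards [hae] with v hv
    rw [hslice v, hdens, withDensity_apply _ measurableSet_Ioc]
    calc ∫⁻ u in Set.Ioc (lo v) (hi v), ENNReal.ofReal (f u)
        ≤ ∫⁻ _ in Set.Ioc (lo v) (hi v), ENNReal.ofReal K :=
          lintegral_mono fun u => ENNReal.ofReal_le_ofReal (hK u)
      _ = ENNReal.ofReal K * volume (Set.Ioc (lo v) (hi v)) := by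
          rw [setLIntegral_const, mul_comm]
      _ = ENNReal.ofReal K * ENNReal.ofReal (hi v - lo v) := by
          rw [Real.volume_Ioc]
      _ ≤ ENNReal.ofReal K * ENNReal.ofReal (α * v) := by
          exact mul_le_mul_right (ENNReal.ofReal_le_ofReal (hlen v hv)) _
      _ = ENNReal.ofReal (α * K * v) := by
          rw [← ENNReal.ofReal_mul hK0]; ring_nf
  calc ∫⁻ v, (μ.map X) ((fun u => (u, v)) ⁻¹' T) ∂(μ.map D)
      ≤ ∫⁻ v, ENNReal.ofReal (α * K * v) ∂(μ.map D) := lintegral_mono_ae hbound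
    _ = ∫⁻ ω, ENNReal.ofReal (α * K * D ω) ∂μ := by
        have hm : Measurable fun v : ℝ => ENNReal.ofReal (α * K * v) :=
          (measurable_id.const_mul (α * K)).ennreal_ofReal
        exact lintegral_map hm hD
    _ ≤ ENNReal.ofReal (α * K * ∫ ω, D ω ∂μ) := by
        rw [← ofReal_integral_eq_lintegral_ofReal
            (hint.const_mul (α * K))
            (ae_of_all μ fun ω => mul_nonneg (mul_nonneg hα hK0) (hD0 ω))]
        rw [integral_const_mul]

/-- Abstract form of Theorem 1: if `|X̂ - X| ≤ α|S - s|` a.s., `E[(S - s)²] ≤ B`, `X` has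
    density bounded by `K`, and `|S - s|` is independent of `X`, then
    `|P(X̂ ≤ x) - P(X ≤ x)| ≤ α²B/ε² + 2αK√B`. -/
theorem cdf_error_lipschitz_field
    {Ω : Type*} [MeasurableSpace Ω] (μ : Measure Ω) [IsProbabilityMeasure μ]
    (X Xhat S : Ω → ℝ) (hX : Measurable X) (hXhat : Measurable Xhat) (hS : Measurable S)
    (s : ℝ) (hs : s ∈ Set.Icc (0:ℝ) 1) (hSrange : ∀ ω, S ω ∈ Set.Icc (0:ℝ) 1)
    (α : ℝ) (hα : 0 < α)
    (hLip : ∀ᵐ ω ∂μ, |Xhat ω - X ω| ≤ α * |S ω - s|)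
    (B : ℝ) (hB0 : 0 ≤ B) (hB : ∫ ω, (S ω - s) ^ 2 ∂μ ≤ B)
    (f : ℝ → ℝ) (hf0 : ∀ y, 0 ≤ f y) (K : ℝ)
    (hdens : μ.map X = (volume : Measure ℝ).withDensity fun y => ENNReal.ofReal (f y))
    (hK : ∀ y, f y ≤ K)
    (hindep : IndepFun X (fun ω => |S ω - s|) μ)
    (ε : ℝ) (hε : 0 < ε) (x : ℝ) :
    |(μ {ω | Xhat ω ≤ x}).toReal - (μ {ω | X ω ≤ x}).toReal| ≤
      α ^ 2 * B / ε ^ 2 + 2 * α * K * Real.sqrt B := by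
  set D : Ω → ℝ := fun ω => |S ω - s| with hD_def
  have hD : Measurable D := (hS.sub measurable_const).abs
  have hD0 : ∀ ω, 0 ≤ D ω := fun ω => abs_nonneg _
  have hD1 : ∀ ω, D ω ≤ 1 := by
    intro ω
    have h1 := hSrange ω
    have h2 := hs
    simp only [Set.mem_Icc] at h1 h2
    rw [hD_def]
    exact abs_le.mpr ⟨by linarith, by linarith⟩
  have hK0 : 0 ≤ K := (hf0 0).trans (hK 0)
  have hint : Integrable D μ := by
    refine ⟨hD.aestronglyMeasurable, HasFiniteIntegral.of_bounded (C := 1) ?_⟩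
    exact ae_of_all μ fun ω => by rw [Real.norm_eq_abs, abs_of_nonneg (hD0 ω)]; exact hD1 ω
  have hint2 : Integrable (fun ω => D ω ^ 2) μ := by
    refine ⟨(hD.pow_const 2).aestronglyMeasurable, HasFiniteIntegral.of_bounded (C := 1) ?_⟩
    refine ae_of_all μ fun ω => ?_
    rw [Real.norm_eq_abs, abs_of_nonneg (sq_nonneg _)]
    nlinarith [hD0 ω, hD1 ω]
  set ED : ℝ := ∫ ω, D ω ∂μ with hED_def
  have hED0 : 0 ≤ ED := integral_nonneg hD0
  -- ED ≤ sqrt B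
  have hEDsq : ED ^ 2 ≤ B := by
    have hvar : 0 ≤ ∫ ω, (D ω - ED) ^ 2 ∂μ := integral_nonneg fun ω => sq_nonneg _
    have hexp : ∫ ω, (D ω - ED) ^ 2 ∂μ = (∫ ω, D ω ^ 2 ∂μ) - ED ^ 2 := by
      have : ∀ ω, (D ω - ED) ^ 2 = D ω ^ 2 - (2 * ED) * D ω + ED ^ 2 := fun ω => by ring
      simp_rw [this]
      have hsubint : Integrable (fun ω => D ω ^ 2 - 2 * ED * D ω) μ :=
        hint2.sub (hint.const_mul (2 * ED))
      rw [integral_add hsubint (integrable_const _),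
        integral_sub hint2 (hint.const_mul (2 * ED)), integral_const_mul, integral_const]
      simp [← hED_def]
      ring
    have hDsq : ∫ ω, D ω ^ 2 ∂μ = ∫ ω, (S ω - s) ^ 2 ∂μ := by
      congr 1; funext ω; rw [hD_def]; exact sq_abs _
    rw [hexp, hDsq] at hvar
    linarith
  have hEDB : ED ≤ Real.sqrt B := (Real.le_sqrt hED0 hB0).mpr hEDsq
  -- the two crossing bounds
  have key₁ : μ {ω | x < X ω ∧ X ω ≤ x + α * D ω} ≤ ENNReal.ofReal (α * K * ED) := by
    have := slice_crossing_bound μ X D hX hD hD0 hint α K hα.le hK0 f hdens hK hindep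
      (fun _ => x) (fun v => x + α * v) measurable_const
      (measurable_const.add (measurable_id.const_mul α))
      (fun v hv => by simp)
    simpa using this
  have key₂ : μ {ω | x - α * D ω < X ω ∧ X ω ≤ x} ≤ ENNReal.ofReal (α * K * ED) := by
    have := slice_crossing_bound μ X D hX hD hD0 hint α K hα.le hK0 f hdens hK hindep
      (fun v => x - α * v) (fun _ => x)
      (measurable_const.sub (measurable_id.const_mul α)) measurable_const
      (fun v hv => by simp)
    simpa using this
  -- null bad set
  set N : Set Ω := {ω | ¬ |Xhat ω - X ω| ≤ α * D ω} with hN_def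
  have hN : μ N = 0 := by
    rw [hN_def]
    exact hLip
  set A : Set Ω := {ω | Xhat ω ≤ x}
  set C : Set Ω := {ω | X ω ≤ x}
  have hsub₁ : A ⊆ C ∪ N ∪ {ω | x < X ω ∧ X ω ≤ x + α * D ω} := by
    intro ω hω
    by_cases hC : X ω ≤ x
    · exact Or.inl (Or.inl hC)
    · by_cases hNn : |Xhat ω - X ω| ≤ α * D ω
      · refine Or.inr ⟨lt_of_not_ge hC, ?_⟩
        have := abs_le.mp hNn
        have hωA : Xhat ω ≤ x := hω
        linarith [this.1]
      · exact Or.inl (Or.inr hNn)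
  have hsub₂ : C ⊆ A ∪ N ∪ {ω | x - α * D ω < X ω ∧ X ω ≤ x} := by
    intro ω hω
    by_cases hA : Xhat ω ≤ x
    · exact Or.inl (Or.inl hA)
    · by_cases hNn : |Xhat ω - X ω| ≤ α * D ω
      · refine Or.inr ⟨?_, hω⟩
        have := abs_le.mp hNn
        have : Xhat ω - X ω ≤ α * D ω := this.2
        have hA' : x < Xhat ω := lt_of_not_ge hA
        linarith
      · exact Or.inl (Or.inr hNn)
  have hbd₁ : μ A ≤ μ C + ENNReal.ofReal (α * K * ED) := by
    calc μ A ≤ μ (C ∪ N ∪ {ω | x < X ω ∧ X ω ≤ x + α * D ω}) := measure_mono hsub₁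
      _ ≤ μ (C ∪ N) + μ {ω | x < X ω ∧ X ω ≤ x + α * D ω} := measure_union_le _ _
      _ ≤ μ C + ENNReal.ofReal (α * K * ED) := by
          refine add_le_add ?_ key₁
          calc μ (C ∪ N) ≤ μ C + μ N := measure_union_le _ _
            _ = μ C := by rw [hN, add_zero]
  have hbd₂ : μ C ≤ μ A + ENNReal.ofReal (α * K * ED) := by
    calc μ C ≤ μ (A ∪ N ∪ {ω | x - α * D ω < X ω ∧ X ω ≤ x}) := measure_mono hsub₂
      _ ≤ μ (A ∪ N) + μ {ω | x - α * D ω < X ω ∧ X ω ≤ x} := measure_union_le _ _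
      _ ≤ μ A + ENNReal.ofReal (α * K * ED) := by
          refine add_le_add ?_ key₂
          calc μ (A ∪ N) ≤ μ A + μ N := measure_union_le _ _
            _ = μ A := by rw [hN, add_zero]
  -- convert to reals
  have hAfin : μ A ≠ ⊤ := measure_ne_top μ A
  have hCfin : μ C ≠ ⊤ := measure_ne_top μ C
  have hb0 : 0 ≤ α * K * ED := mul_nonneg (mul_nonneg hα.le hK0) hED0
  have ht₁ : (μ A).toReal ≤ (μ C).toReal + α * K * ED := by
    have := ENNReal.toReal_mono (by finiteness) hbd₁
    rwa [ENNReal.toReal_add hCfin ENNReal.ofReal_ne_top, ENNReal.toReal_ofReal hb0] at this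
  have ht₂ : (μ C).toReal ≤ (μ A).toReal + α * K * ED := by
    have := ENNReal.toReal_mono (by finiteness) hbd₂
    rwa [ENNReal.toReal_add hAfin ENNReal.ofReal_ne_top, ENNReal.toReal_ofReal hb0] at this
  have hfinal : α * K * ED ≤ α ^ 2 * B / ε ^ 2 + 2 * α * K * Real.sqrt B := by
    have h1 : α * K * ED ≤ 2 * α * K * Real.sqrt B := by
      nlinarith [mul_le_mul_of_nonneg_left hEDB (mul_nonneg hα.le hK0),
        mul_nonneg (mul_nonneg hα.le hK0) (Real.sqrt_nonneg B)]
    have h2 : 0 ≤ α ^ 2 * B / ε ^ 2 := by positivity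
    linarith
  rw [abs_sub_le_iff]
  constructor <;> linarith
end
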